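/- arXiv:1405.0778 — 4 statements merged into one kernel-verified Lean document; each statement's English description precedes it below -/
import Mathlib

section
/- Let p(z) = 1 + Σ_{1≤|α|≤m} a_α z^α be a holomorphic polynomial on ℂ^N (N ≥ 1, multi-index notation) that has no zeros in the open unit ball 𝔹^N. Then there is a constant C̃_m depending only on m such that |a_α| ≤ C̃_m for all 1 ≤ |α| ≤ m. -/
/-!
Restricting `p` to the complex line through a point `w` of the ball gives a one-variable
polynomial `q(t) = p(t w)` with `q(0) = 1` whose roots all lie outside the closed unit disc.
Factoring `q` over its roots gives `|q(t)| ≤ 2 ^ deg q · |q(0)|` on that disc, so `|p| ≤ 2 ^ m`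
on the ball. The torus `|z_i| = 1 / (N + 1)` lies in the ball, and averaging `p` against
characters over a grid of roots of unity on it (a discrete Cauchy formula) bounds each
coefficient by `2 ^ m (N + 1) ^ |α|`.
-/

open Polynomial in
theorem Polynomial.norm_eval_le_two_pow_natDegree_mul {K : Type*} [NormedField K] [IsAlgClosed K]
    (q : K[X]) {x : K} (hx : ∀ ρ ∈ q.roots, ‖x‖ ≤ ‖ρ‖) :
    ‖q.eval x‖ ≤ 2 ^ q.natDegree * ‖q.eval 0‖ := by
  have hq := IsAlgClosed.splits q
  have norm_prod (s : Multiset K) : ‖s.prod‖ = (s.map (‖·‖)).prod :=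
    map_multiset_prod normHom s
  rw [hq.eval_eq_prod_roots, hq.eval_eq_prod_roots, norm_mul, norm_mul, norm_prod, norm_prod,
    Multiset.map_map, Multiset.map_map, ← IsAlgClosed.card_roots_eq_natDegree, mul_left_comm,
    ← Multiset.prod_replicate, ← Multiset.map_const', ← Multiset.prod_map_mul]
  gcongr
  refine Multiset.prod_map_le_prod_map₀ _ _ (fun _ _ => norm_nonneg _) fun ρ hρ => ?_
  simpa [two_mul] using (norm_sub_le x ρ).trans (add_le_add_left (hx ρ hρ) _)

theorem IsPrimitiveRoot.sum_pow_mul_inv_pow_eq_ite {K : Type*} [Field K] {ζ : K} {n : ℕ}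
    (hζ : IsPrimitiveRoot ζ n) {a b : ℕ} (ha : a < n) (hb : b < n) :
    ∑ k : Fin n, (ζ ^ b * ζ⁻¹ ^ a) ^ (k : ℕ) = if b = a then (n : K) else 0 := by
  rw [Fin.sum_univ_eq_sum_range (fun k => (ζ ^ b * ζ⁻¹ ^ a) ^ k)]
  have hζa : ζ ^ a ≠ 0 := pow_ne_zero _ (hζ.ne_zero (by omega))
  split_ifs with hba
  · subst hba
    simp [inv_pow, mul_inv_cancel₀ hζa]
  · have hne : ζ ^ b * ζ⁻¹ ^ a ≠ 1 := by
      rw [inv_pow]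
      exact fun h => hba (hζ.pow_inj hb ha ((mul_inv_eq_one₀ hζa).mp h))
    have hpow : (ζ ^ b * ζ⁻¹ ^ a) ^ n = 1 := by
      rw [mul_pow, ← pow_mul, ← pow_mul, mul_comm b, mul_comm a, pow_mul, pow_mul, inv_pow,
        hζ.pow_eq_one]
      simp
    rw [geom_sum_eq hne, hpow, sub_self, zero_div]

namespace MvPolynomial

theorem norm_eval_le_two_pow_totalDegree_mul {σ K : Type*} [NormedField K] [IsAlgClosed K]
    (p : MvPolynomial σ K) {w : σ → K}
    (hw : ∀ t : K, ‖t‖ ≤ 1 → eval (t • w) p ≠ 0) :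
    ‖eval w p‖ ≤ 2 ^ p.totalDegree * ‖p.coeff 0‖ := by
  set q : Polynomial K := aeval (fun i => Polynomial.C (w i) * Polynomial.X) p
  have hq : ∀ t, q.eval t = eval (t • w) p := fun t => by
    have hline : (fun i => Polynomial.aeval t (Polynomial.C (w i) * Polynomial.X)) = t • w := by
      funext i
      simp only [map_mul, Polynomial.aeval_C, Polynomial.aeval_X, Algebra.algebraMap_self,
        RingHom.id_apply, Pi.smul_apply, smul_eq_mul, mul_comm]
    rw [← Polynomial.coe_aeval_eq_eval, comp_aeval_apply, hline]
    rfl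
  have hdeg : q.natDegree ≤ p.totalDegree := by
    simpa using aeval_natDegree_le p le_rfl _
      fun i => (Polynomial.natDegree_C_mul_le _ _).trans Polynomial.natDegree_X_le
  have hroots : ∀ ρ ∈ q.roots, ‖(1 : K)‖ ≤ ‖ρ‖ := fun ρ hρ => by
    by_contra! h
    exact hw ρ (by simpa using h.le) (hq ρ ▸ Polynomial.isRoot_of_mem_roots hρ)
  calc ‖eval w p‖ = ‖q.eval 1‖ := by rw [hq, one_smul]
    _ ≤ 2 ^ q.natDegree * ‖q.eval 0‖ := q.norm_eval_le_two_pow_natDegree_mul hroots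
    _ ≤ 2 ^ p.totalDegree * ‖p.coeff 0‖ := by
      rw [hq, zero_smul, eval_zero, ← constantCoeff_eq]
      gcongr
      norm_num

theorem sum_eval_mul_eq_coeff {σ K : Type*} [Fintype σ] [DecidableEq σ] [Field K]
    {ζ : K} {n : ℕ} (hζ : IsPrimitiveRoot ζ n) (p : MvPolynomial σ K) {α : σ →₀ ℕ}
    (hp : ∀ β ∈ p.support, ∀ i, β i < n) (hα : ∀ i, α i < n) (r : σ → K) :
    ∑ j : σ → Fin n, eval (fun i => r i * ζ ^ (j i : ℕ)) p * ∏ i, ζ⁻¹ ^ ((j i : ℕ) * α i)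
      = (n : K) ^ Fintype.card σ * (∏ i, r i ^ α i) * p.coeff α := by
  have hmonomial : ∀ β ∈ p.support, ∑ j : σ → Fin n,
      ∏ i, (r i * ζ ^ (j i : ℕ)) ^ β i * ζ⁻¹ ^ ((j i : ℕ) * α i)
        = if β = α then (n : K) ^ Fintype.card σ * ∏ i, r i ^ α i else 0 := by
    intro β hβ
    rw [← Fintype.prod_sum
      (fun i (k : Fin n) => (r i * ζ ^ (k : ℕ)) ^ β i * ζ⁻¹ ^ ((k : ℕ) * α i))]
    have hterm : ∀ i (k : ℕ), (r i * ζ ^ k) ^ β i * ζ⁻¹ ^ (k * α i)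
        = r i ^ β i * (ζ ^ β i * ζ⁻¹ ^ α i) ^ k := fun i k => by ring
    simp only [hterm, ← Finset.mul_sum, hζ.sum_pow_mul_inv_pow_eq_ite (hα _) (hp β hβ _)]
    split_ifs with hβα
    · subst hβα
      simp [Finset.prod_mul_distrib, mul_comm]
    · obtain ⟨i, hi⟩ : ∃ i, β i ≠ α i := by
        by_contra! h
        exact hβα (Finsupp.ext h)
      exact Finset.prod_eq_zero (Finset.mem_univ i) (by simp [hi])
  calc ∑ j : σ → Fin n, eval (fun i => r i * ζ ^ (j i : ℕ)) p * ∏ i, ζ⁻¹ ^ ((j i : ℕ) * α i)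
      = ∑ β ∈ p.support, p.coeff β * ∑ j : σ → Fin n,
          ∏ i, (r i * ζ ^ (j i : ℕ)) ^ β i * ζ⁻¹ ^ ((j i : ℕ) * α i) := by
        simp only [eval_eq', Finset.sum_mul, Finset.mul_sum, mul_assoc,
          ← Finset.prod_mul_distrib]
        exact Finset.sum_comm
    _ = (n : K) ^ Fintype.card σ * (∏ i, r i ^ α i) * p.coeff α := by
        rw [Finset.sum_congr rfl fun β hβ => by rw [hmonomial β hβ]]
        simp only [mul_ite, mul_zero, Finset.sum_ite_eq']
        split_ifs with hα
        · ring
        · simp [notMem_support_iff.mp hα]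

open Complex in
theorem norm_coeff_mul_prod_pow_le {σ : Type*} [Fintype σ] (p : MvPolynomial σ ℂ)
    (α : σ →₀ ℕ) {r : σ → ℝ} (hr : ∀ i, 0 ≤ r i) {M : ℝ}
    (hM : ∀ z : σ → ℂ, (∀ i, ‖z i‖ = r i) → ‖eval z p‖ ≤ M) :
    ‖p.coeff α‖ * ∏ i, r i ^ α i ≤ M := by
  classical
  set n := p.totalDegree + α.degree + 1
  have hn : n ≠ 0 := Nat.add_one_ne_zero _
  have hζ := isPrimitiveRoot_exp n hn
  have hp : ∀ β ∈ p.support, ∀ i, β i < n := fun β hβ i => by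
    have := (Finsupp.le_degree i β).trans (le_totalDegree hβ)
    omega
  have hα : ∀ i, α i < n := fun i => by
    have := Finsupp.le_degree i α
    omega
  have hcoeff := p.sum_eval_mul_eq_coeff hζ hp hα (fun i => (r i : ℂ))
  refine le_of_mul_le_mul_left ?_ (by positivity : (0 : ℝ) < n ^ Fintype.card σ)
  calc (n : ℝ) ^ Fintype.card σ * (‖p.coeff α‖ * ∏ i, r i ^ α i)
      = ‖(n : ℂ) ^ Fintype.card σ * (∏ i, (r i : ℂ) ^ α i) * p.coeff α‖ := by
        simp only [Complex.norm_mul, norm_pow, RCLike.norm_natCast, norm_prod, norm_real,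
          Real.norm_eq_abs, abs_of_nonneg (hr _)]
        ring
    _ ≤ ∑ _j : σ → Fin n, M := by
        rw [← hcoeff]
        refine norm_sum_le_of_le _ fun j _ => ?_
        rw [norm_mul, norm_prod]
        simp only [norm_pow, norm_inv, hζ.norm'_eq_one hn, inv_one, one_pow,
          Finset.prod_const_one, mul_one]
        exact hM _ fun i => by simp [hζ.norm'_eq_one hn, abs_of_nonneg (hr i)]
    _ = n ^ Fintype.card σ * M := by simp

end MvPolynomial

theorem stmt_2_general (N m : ℕ) :
    ∃ C : ℝ, ∀ p : MvPolynomial (Fin N) ℂ, p.coeff 0 = 1 → p.totalDegree ≤ m →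
      (∀ z : EuclideanSpace ℂ (Fin N), ‖z‖ < 1 →
        MvPolynomial.eval (fun i => z i) p ≠ 0) →
      ∀ α : Fin N →₀ ℕ, 1 ≤ (α.sum fun _ k => k) → (α.sum fun _ k => k) ≤ m →
        ‖p.coeff α‖ ≤ C := by
  refine ⟨2 ^ m * (N + 1) ^ m, fun p h0 hdeg hz α _ hα => ?_⟩
  set r : ℝ := 1 / (N + 1)
  have hball : ∀ w : EuclideanSpace ℂ (Fin N), ‖w‖ < 1 →
      ‖MvPolynomial.eval (fun i => w i) p‖ ≤ 2 ^ m := fun w hw => by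
    refine (p.norm_eval_le_two_pow_totalDegree_mul fun t ht => ?_).trans ?_
    · simpa [Pi.smul_def] using hz (t • w) ((norm_smul_le t w).trans_lt
        (mul_lt_one_of_nonneg_of_lt_one_right ht (norm_nonneg w) hw))
    · rw [h0, norm_one, mul_one]
      exact pow_le_pow_right₀ one_le_two hdeg
  have hcauchy := p.norm_coeff_mul_prod_pow_le α (r := fun _ => r) (fun _ => by positivity)
    fun z hzr => hball (WithLp.toLp 2 z) <| by
      rw [EuclideanSpace.norm_eq, Real.sqrt_lt' one_pos]
      simp only [hzr, Finset.sum_const, Finset.card_univ, Fintype.card_fin, nsmul_eq_mul, r]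
      rw [div_pow, one_pow, mul_one_div, div_lt_one (by positivity)]
      nlinarith
  set s := α.sum fun _ k => k
  rw [Finset.prod_pow_eq_pow_sum, ← Finsupp.sum_fintype α (fun _ k => k) fun _ => rfl] at hcauchy
  calc ‖p.coeff α‖ = ‖p.coeff α‖ * r ^ s * (N + 1) ^ s := by
        rw [mul_assoc, ← mul_pow, one_div_mul_cancel (by positivity), one_pow, mul_one]
    _ ≤ 2 ^ m * (N + 1) ^ m := by
        gcongr
        linarith

/-- For each `m`, there is a constant `C̃_m` depending only on `m` such that any
polynomial `p(z) = 1 + ∑_{1 ≤ |α| ≤ m} a_α z^α` on `ℂ^N` (`N ≥ 1`) with no zeros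
in the open unit ball has all its coefficients bounded by `C̃_m`. -/
theorem stmt_2 (N m : ℕ) (hN : 1 ≤ N) :
    ∃ C : ℝ, ∀ p : MvPolynomial (Fin N) ℂ, p.coeff 0 = 1 → p.totalDegree ≤ m →
      (∀ z : EuclideanSpace ℂ (Fin N), ‖z‖ < 1 →
        MvPolynomial.eval (fun i => z i) p ≠ 0) →
      ∀ α : Fin N →₀ ℕ, 1 ≤ (α.sum fun _ k => k) → (α.sum fun _ k => k) ≤ m →
        ‖p.coeff α‖ ≤ C :=
  stmt_2_general N m
end

section
/- Let p be a polynomial on ℂ^N with p(0) = 1 and no zeros in the open unit ball 𝔹^N, of total degree at most m. Then for every z on the unit sphere ∂𝔹^N, the one-variable polynomial ξ ↦ p(ξz) on the unit disk has no zeros in the unit disk, hence |p(w)| ≤ m·C_m + 1 for all w ∈ 𝔹^N, where C_m is the one-variable coefficient bound constant. -/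
/-!
Restricted to the complex line through `w`, `p` becomes the one-variable polynomial
`q(ξ) = p(ξ w)`, with `q(0) = 1`, degree at most `m`, and no zeros in the unit disk when
`‖w‖ ≤ 1`. All roots of such a `q` lie outside the open disk, so its Mahler measure is
`|q(0)| = 1`, and Mignotte's bound gives `|q_k| ≤ (deg q choose k) ≤ 2^m`. Evaluating at
`ξ = 1` bounds `|p(w)|` by `m 2^m + 1`.
-/

open Polynomial

namespace Polynomial

theorem mahlerMeasure_eq_norm_coeff_zero {q : ℂ[X]}
    (hq : ∀ ξ : ℂ, ‖ξ‖ < 1 → q.eval ξ ≠ 0) : q.mahlerMeasure = ‖q.coeff 0‖ := by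
  have roots_norm : ∀ a ∈ q.roots, max 1 ‖a‖ = ‖a‖ := fun a ha =>
    max_eq_right <| not_lt.1 fun h => hq a h (isRoot_of_mem_roots ha)
  rw [mahlerMeasure_eq_leadingCoeff_mul_prod_roots, Multiset.map_congr rfl roots_norm,
    (IsAlgClosed.splits q).coeff_zero_eq_leadingCoeff_mul_prod_roots]
  rw [norm_mul, norm_mul, norm_pow, norm_neg, norm_one, one_pow, one_mul]
  exact congrArg _ (Multiset.prod_hom q.roots (normHom : ℂ →*₀ ℝ))

theorem norm_coeff_le_choose_mul_norm_coeff_zero {q : ℂ[X]}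
    (hq : ∀ ξ : ℂ, ‖ξ‖ < 1 → q.eval ξ ≠ 0) (k : ℕ) :
    ‖q.coeff k‖ ≤ q.natDegree.choose k * ‖q.coeff 0‖ :=
  mahlerMeasure_eq_norm_coeff_zero hq ▸ norm_coeff_le_choose_mul_mahlerMeasure k q

theorem norm_coeff_le_two_pow {q : ℂ[X]} {m : ℕ} (h0 : q.coeff 0 = 1)
    (hdeg : q.natDegree ≤ m) (hq : ∀ ξ : ℂ, ‖ξ‖ < 1 → q.eval ξ ≠ 0) (k : ℕ) :
    ‖q.coeff k‖ ≤ 2 ^ m := by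
  calc ‖q.coeff k‖ ≤ q.natDegree.choose k * ‖q.coeff 0‖ :=
        norm_coeff_le_choose_mul_norm_coeff_zero hq k
    _ = q.natDegree.choose k := by rw [h0, norm_one, mul_one]
    _ ≤ 2 ^ m := by
        exact_mod_cast (Nat.choose_le_two_pow _ _).trans (Nat.pow_le_pow_right two_pos hdeg)

theorem norm_eval_one_le {R : Type*} [NormedRing R] {q : R[X]} {m : ℕ} {C : ℝ}
    (hdeg : q.natDegree ≤ m) (hC : ∀ i, 1 ≤ i → i ≤ m → ‖q.coeff i‖ ≤ C) :
    ‖q.eval 1‖ ≤ m * C + ‖q.coeff 0‖ := by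
  rw [eval_eq_sum_range' (Nat.lt_succ_of_le hdeg), Finset.sum_range_succ']
  calc ‖∑ i ∈ Finset.range m, q.coeff (i + 1) * 1 ^ (i + 1) + q.coeff 0 * 1 ^ 0‖
      ≤ ∑ i ∈ Finset.range m, ‖q.coeff (i + 1)‖ + ‖q.coeff 0‖ := by
        simpa using norm_add_le_of_le (norm_sum_le _ _) le_rfl
    _ ≤ ∑ _i ∈ Finset.range m, C + ‖q.coeff 0‖ := by
        gcongr with i hi
        exact hC _ (Nat.le_add_left 1 i) (Finset.mem_range.1 hi)
    _ = m * C + ‖q.coeff 0‖ := by simp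

end Polynomial

namespace MvPolynomial

variable {R σ : Type*} [CommSemiring R]

noncomputable def slice (p : MvPolynomial σ R) (w : σ → R) : R[X] :=
  aeval (fun i => Polynomial.C (w i) * Polynomial.X) p

theorem eval_slice (p : MvPolynomial σ R) (w : σ → R) (ξ : R) :
    (p.slice w).eval ξ = eval (fun i => ξ * w i) p := by
  rw [slice, ← Polynomial.coe_aeval_eq_eval, comp_aeval_apply]
  simp [mul_comm _ ξ]

theorem coeff_zero_slice (p : MvPolynomial σ R) (w : σ → R) :
    (p.slice w).coeff 0 = p.coeff 0 := by
  simp [coeff_zero_eq_eval_zero, eval_slice, constantCoeff_eq]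

theorem natDegree_slice_le (p : MvPolynomial σ R) (w : σ → R) :
    (p.slice w).natDegree ≤ p.totalDegree := by
  have h := aeval_natDegree_le (n := 1) p le_rfl (fun i => Polynomial.C (w i) * Polynomial.X)
    fun i => (natDegree_C_mul_le (w i) Polynomial.X).trans natDegree_X_le
  rwa [mul_one] at h

end MvPolynomial

theorem stmt_3_general (N m : ℕ) (p : MvPolynomial (Fin N) ℂ)
    (h0 : p.coeff 0 = 1) (hdeg : p.totalDegree ≤ m)
    (hnz : ∀ z : EuclideanSpace ℂ (Fin N), ‖z‖ < 1 →
      MvPolynomial.eval (fun i => z i) p ≠ 0) :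
    (∀ z : EuclideanSpace ℂ (Fin N), ‖z‖ = 1 → ∀ ξ : ℂ, ‖ξ‖ < 1 →
      MvPolynomial.eval (fun i => ξ * z i) p ≠ 0) ∧
    ∃ C : ℝ,
      (∀ q : Polynomial ℂ, q.coeff 0 = 1 → q.natDegree ≤ m →
        (∀ ξ : ℂ, ‖ξ‖ < 1 → q.eval ξ ≠ 0) →
        ∀ i : ℕ, 1 ≤ i → i ≤ m → ‖q.coeff i‖ ≤ C) ∧
      (∀ w : EuclideanSpace ℂ (Fin N), ‖w‖ < 1 →
        ‖MvPolynomial.eval (fun i => w i) p‖ ≤ m * C + 1) := by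
  have eval_smul_ne_zero : ∀ w : EuclideanSpace ℂ (Fin N), ‖w‖ ≤ 1 → ∀ ξ : ℂ, ‖ξ‖ < 1 →
      MvPolynomial.eval (fun i => ξ * w i) p ≠ 0 := fun w hw ξ hξ =>
    hnz (ξ • w) <| by
      rw [norm_smul]
      exact (mul_le_of_le_one_right (norm_nonneg ξ) hw).trans_lt hξ
  refine ⟨fun z hz => eval_smul_ne_zero z hz.le, 2 ^ m,
    fun q hq0 hqdeg hq i _ _ => norm_coeff_le_two_pow hq0 hqdeg hq i, fun w hw => ?_⟩
  set q := p.slice fun i => w i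
  have hq0 : q.coeff 0 = 1 := (p.coeff_zero_slice _).trans h0
  have hqdeg : q.natDegree ≤ m := (p.natDegree_slice_le _).trans hdeg
  have hq : ∀ ξ : ℂ, ‖ξ‖ < 1 → q.eval ξ ≠ 0 := fun ξ hξ => by
    simpa only [q, MvPolynomial.eval_slice] using eval_smul_ne_zero w hw.le ξ hξ
  simpa [q, MvPolynomial.eval_slice, hq0] using
    norm_eval_one_le hqdeg fun i _ _ => norm_coeff_le_two_pow hq0 hqdeg hq i

/-- Slicing argument: if a polynomial `p` on `ℂ^N` of total degree at most `m`
with `p(0) = 1` has no zeros in the open unit ball, then each slice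
`ξ ↦ p(ξ z)` for `z` on the unit sphere has no zeros in the unit disk, and
consequently `|p(w)| ≤ m·C_m + 1` on the ball, where `C_m` is the one-variable
coefficient bound constant. -/
theorem stmt_3 (N m : ℕ) (hN : 1 ≤ N) (p : MvPolynomial (Fin N) ℂ)
    (h0 : p.coeff 0 = 1) (hdeg : p.totalDegree ≤ m)
    (hnz : ∀ z : EuclideanSpace ℂ (Fin N), ‖z‖ < 1 →
      MvPolynomial.eval (fun i => z i) p ≠ 0) :
    (∀ z : EuclideanSpace ℂ (Fin N), ‖z‖ = 1 → ∀ ξ : ℂ, ‖ξ‖ < 1 →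
      MvPolynomial.eval (fun i => ξ * z i) p ≠ 0) ∧
    ∃ C : ℝ,
      (∀ q : Polynomial ℂ, q.coeff 0 = 1 → q.natDegree ≤ m →
        (∀ ξ : ℂ, ‖ξ‖ < 1 → q.eval ξ ≠ 0) →
        ∀ i : ℕ, 1 ≤ i → i ≤ m → ‖q.coeff i‖ ≤ C) ∧
      (∀ w : EuclideanSpace ℂ (Fin N), ‖w‖ < 1 →
        ‖MvPolynomial.eval (fun i => w i) p‖ ≤ m * C + 1) :=
  stmt_3_general N m p h0 hdeg hnz
end

section
/- Fix ε₀ > 0, c > 0, and 0 < ε < 1. Define F : ℂ² → ℂ⁶ by F(z,w) = (√ε₀ z⁴, (1/2)√(ε₀c)(z⁷+z), w, z⁵, √ε z, (1/2)√(ε₀c)(z⁷−z)). Then for all (z,w) ∈ ℂ², Σ_{j=1}^5 |F_j(z,w)|² − |F_6(z,w)|² = ε₀(|z|⁸ + c·Re(|z|²z⁶)) + |w|² + |z|¹⁰ + ε|z|². Consequently F maps the hypersurface M_ε = {ε₀(|z|⁸ + c·Re(|z|²z⁶)) + |w|² + |z|¹⁰ + ε|z|² = 1} into the generalized sphere {Z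 ∈ ℂ⁶ : Σ_{j=1}^5 |Z_j|² − |Z_6|² = 1}. -/
open Complex ComplexConjugate

/-!
`|F₁|², |F₄|², |F₅|²` are `ε₀|z|⁸, |z|¹⁰, ε|z|²`, while `F₂` and `F₆` combine by polarization,
`|a + b|² − |a − b|² = 4 Re(a b̄)`: with `a = z⁷`, `b = z` this is `4 Re(z⁷ z̄) = 4 |z|² Re(z⁶)`,
so the one negative direction of the sphere produces the indefinite term `c·Re(|z|²z⁶)`.
-/

namespace Complex

theorem sq_norm_add_sub_sq_norm_sub (a b : ℂ) :
    ‖a + b‖ ^ 2 - ‖a - b‖ ^ 2 = 4 * (a * conj b).re := by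
  rw [Complex.sq_norm, Complex.sq_norm, normSq_add, normSq_sub]
  ring

theorem re_pow_succ_mul_conj (z : ℂ) (n : ℕ) :
    (z ^ (n + 1) * conj z).re = normSq z * (z ^ n).re := by
  rw [pow_succ, mul_assoc, mul_conj, mul_comm, re_ofReal_mul]

theorem sq_norm_sqrt_mul {x : ℝ} (hx : 0 ≤ x) (a : ℂ) :
    ‖(Real.sqrt x : ℂ) * a‖ ^ 2 = x * ‖a‖ ^ 2 := by
  rw [norm_mul, mul_pow, norm_real, Real.norm_eq_abs, sq_abs, Real.sq_sqrt hx]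

theorem sq_norm_half_sqrt_mul_add_sub {x : ℝ} (hx : 0 ≤ x) (a b : ℂ) :
    ‖(1 / 2 : ℂ) * (Real.sqrt x : ℂ) * (a + b)‖ ^ 2
      - ‖(1 / 2 : ℂ) * (Real.sqrt x : ℂ) * (a - b)‖ ^ 2 = x * (a * conj b).re := by
  have hhalf : ‖(1 / 2 : ℂ)‖ ^ 2 = 1 / 4 := by norm_num
  simp only [mul_assoc, norm_mul (1 / 2 : ℂ), mul_pow, hhalf, sq_norm_sqrt_mul hx]
  linear_combination (x / 4) * sq_norm_add_sub_sq_norm_sub a b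

end Complex

theorem stmt_5_general (ε₀ c ε : ℝ) (h₀ : 0 < ε₀) (hc : 0 < c) (hε : 0 < ε) :
    ∀ z w : ℂ,
      (‖(Real.sqrt ε₀ : ℂ) * z ^ 4‖ ^ 2
        + ‖(1 / 2 : ℂ) * (Real.sqrt (ε₀ * c) : ℂ) * (z ^ 7 + z)‖ ^ 2
        + ‖w‖ ^ 2 + ‖z ^ 5‖ ^ 2 + ‖(Real.sqrt ε : ℂ) * z‖ ^ 2
        - ‖(1 / 2 : ℂ) * (Real.sqrt (ε₀ * c) : ℂ) * (z ^ 7 - z)‖ ^ 2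
        = ε₀ * (‖z‖ ^ 8 + c * (Complex.normSq z * (z ^ 6).re))
          + ‖w‖ ^ 2 + ‖z‖ ^ 10 + ε * ‖z‖ ^ 2)
      ∧ (ε₀ * (‖z‖ ^ 8 + c * (Complex.normSq z * (z ^ 6).re))
            + ‖w‖ ^ 2 + ‖z‖ ^ 10 + ε * ‖z‖ ^ 2 = 1 →
          ‖(Real.sqrt ε₀ : ℂ) * z ^ 4‖ ^ 2
            + ‖(1 / 2 : ℂ) * (Real.sqrt (ε₀ * c) : ℂ) * (z ^ 7 + z)‖ ^ 2
            + ‖w‖ ^ 2 + ‖z ^ 5‖ ^ 2 + ‖(Real.sqrt ε : ℂ) * z‖ ^ 2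
            - ‖(1 / 2 : ℂ) * (Real.sqrt (ε₀ * c) : ℂ) * (z ^ 7 - z)‖ ^ 2 = 1) := by
  intro z w
  have hpolar := sq_norm_half_sqrt_mul_add_sub (mul_pos h₀ hc).le (z ^ 7) z
  rw [re_pow_succ_mul_conj] at hpolar
  have hidentity : ‖(Real.sqrt ε₀ : ℂ) * z ^ 4‖ ^ 2
        + ‖(1 / 2 : ℂ) * (Real.sqrt (ε₀ * c) : ℂ) * (z ^ 7 + z)‖ ^ 2
        + ‖w‖ ^ 2 + ‖z ^ 5‖ ^ 2 + ‖(Real.sqrt ε : ℂ) * z‖ ^ 2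
        - ‖(1 / 2 : ℂ) * (Real.sqrt (ε₀ * c) : ℂ) * (z ^ 7 - z)‖ ^ 2
        = ε₀ * (‖z‖ ^ 8 + c * (Complex.normSq z * (z ^ 6).re))
          + ‖w‖ ^ 2 + ‖z‖ ^ 10 + ε * ‖z‖ ^ 2 := by
    rw [sq_norm_sqrt_mul h₀.le, sq_norm_sqrt_mul hε.le, norm_pow, norm_pow]
    linear_combination hpolar
  exact ⟨hidentity, hidentity.trans⟩

/-- The explicit map `F : ℂ² → ℂ⁶` satisfies
`∑_{j=1}^5 |F_j|² − |F_6|² = ε₀(|z|⁸ + c·Re(|z|²z⁶)) + |w|² + |z|¹⁰ + ε|z|²`,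
and consequently maps `M_ε` into the generalized sphere
`{∑_{j=1}^5 |Z_j|² − |Z_6|² = 1}`. -/
theorem stmt_5 (ε₀ c ε : ℝ) (h₀ : 0 < ε₀) (hc : 0 < c) (hε : 0 < ε) (hε1 : ε < 1) :
    ∀ z w : ℂ,
      (‖(Real.sqrt ε₀ : ℂ) * z ^ 4‖ ^ 2
        + ‖(1 / 2 : ℂ) * (Real.sqrt (ε₀ * c) : ℂ) * (z ^ 7 + z)‖ ^ 2
        + ‖w‖ ^ 2 + ‖z ^ 5‖ ^ 2 + ‖(Real.sqrt ε : ℂ) * z‖ ^ 2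
        - ‖(1 / 2 : ℂ) * (Real.sqrt (ε₀ * c) : ℂ) * (z ^ 7 - z)‖ ^ 2
        = ε₀ * (‖z‖ ^ 8 + c * (Complex.normSq z * (z ^ 6).re))
          + ‖w‖ ^ 2 + ‖z‖ ^ 10 + ε * ‖z‖ ^ 2)
      ∧ (ε₀ * (‖z‖ ^ 8 + c * (Complex.normSq z * (z ^ 6).re))
            + ‖w‖ ^ 2 + ‖z‖ ^ 10 + ε * ‖z‖ ^ 2 = 1 →
          ‖(Real.sqrt ε₀ : ℂ) * z ^ 4‖ ^ 2
            + ‖(1 / 2 : ℂ) * (Real.sqrt (ε₀ * c) : ℂ) * (z ^ 7 + z)‖ ^ 2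
            + ‖w‖ ^ 2 + ‖z ^ 5‖ ^ 2 + ‖(Real.sqrt ε : ℂ) * z‖ ^ 2
            - ‖(1 / 2 : ℂ) * (Real.sqrt (ε₀ * c) : ℂ) * (z ^ 7 - z)‖ ^ 2 = 1) :=
  stmt_5_general ε₀ c ε h₀ hc hε
end

section
/- Let p = (z_p, w_p) and q = (z_q, w_q) be points in ℂ² with w_p ≠ 0, w_q ≠ 0, and p ≠ q. Then the polynomials ξ ↦ φ(\bar{p}, ξ) and ξ ↦ φ(\bar{q}, ξ) defining the Segre varieties Q_p and Q_q of M_ε are not identically equal; i.e., distinct points with nonzero w-coordinate have distinct Segre varieties. -/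
/-
Evaluating at `ξ = 0` recovers `1 / w̄`, so the two points share their `w`-coordinate; after
clearing that denominator the numerators agree as polynomials in `ξ`, and their `ξ⁷`
coefficients `ε₀ (c / 2) z̄` then recover `z`.
-/

open Complex

/-- The graphing function `φ(p̄, ξ)` of the Segre variety of `M_ε`. -/
noncomputable def segrePhi (ε₀ c ε : ℝ) (zp wp ξ : ℂ) : ℂ :=
  -((ε₀ : ℂ) * (ξ ^ 4 * (starRingEnd ℂ zp) ^ 4
      + ((c : ℂ) / 2) * (ξ ^ 7 * starRingEnd ℂ zp + ξ * (starRingEnd ℂ zp) ^ 7))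
    + ξ ^ 5 * (starRingEnd ℂ zp) ^ 5 + (ε : ℂ) * ξ * starRingEnd ℂ zp - 1)
    / starRingEnd ℂ wp

open Polynomial

noncomputable def segreNumerator (ε₀ c ε : ℝ) (a : ℂ) : ℂ[X] :=
  C (ε₀ * (c / 2) * a) * X ^ 7 + C (a ^ 5) * X ^ 5 + C (ε₀ * a ^ 4) * X ^ 4
    + C (ε * a + ε₀ * (c / 2) * a ^ 7) * X - 1

theorem segrePhi_eq_eval (ε₀ c ε : ℝ) (zp wp ξ : ℂ) :
    segrePhi ε₀ c ε zp wp ξ =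
      -(segreNumerator ε₀ c ε (starRingEnd ℂ zp)).eval ξ / starRingEnd ℂ wp := by
  rw [segrePhi, segreNumerator]
  simp only [eval_sub, eval_add, eval_mul, eval_C, eval_X, eval_pow, eval_one]
  ring

theorem segrePhi_zero (ε₀ c ε : ℝ) (zp wp : ℂ) :
    segrePhi ε₀ c ε zp wp 0 = (starRingEnd ℂ wp)⁻¹ := by
  simp [segrePhi]

theorem segreNumerator_coeff_seven (ε₀ c ε : ℝ) (a : ℂ) :
    (segreNumerator ε₀ c ε a).coeff 7 = ε₀ * (c / 2) * a := by
  simp only [segreNumerator, coeff_sub, coeff_add, coeff_C_mul_X_pow, coeff_C_mul_X, coeff_one]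
  norm_num

theorem segreNumerator_injective {ε₀ c : ℝ} (h₀ : ε₀ ≠ 0) (hc : c ≠ 0) (ε : ℝ) :
    Function.Injective (segreNumerator ε₀ c ε) := fun a b hab ↦ by
  have h7 := congrArg (coeff · 7) hab
  simp only [segreNumerator_coeff_seven] at h7
  exact mul_left_cancel₀ (by simp [h₀, hc]) h7

theorem stmt_10_general (ε₀ c ε : ℝ) (h₀ : 0 < ε₀) (hc : c ≠ 0)
    (zp wp zq wq : ℂ) (hwp : wp ≠ 0)
    (hpq : (zp, wp) ≠ (zq, wq)) :
    ¬ (∀ ξ : ℂ, segrePhi ε₀ c ε zp wp ξ = segrePhi ε₀ c ε zq wq ξ) := by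
  intro h
  have hw : wp = wq := (starRingEnd ℂ).injective (by simpa [segrePhi_zero] using h 0)
  subst hw
  have hnum : segreNumerator ε₀ c ε (starRingEnd ℂ zp) =
      segreNumerator ε₀ c ε (starRingEnd ℂ zq) := by
    refine Polynomial.funext fun ξ ↦ ?_
    simpa [segrePhi_eq_eval, hwp] using h ξ
  have hz : zp = zq :=
    (starRingEnd ℂ).injective (segreNumerator_injective h₀.ne' hc ε hnum)
  exact hpq (by rw [hz])

/-- Distinct points with nonzero `w`-coordinate have distinct Segre varieties:
the graphing polynomials `φ(p̄, ·)` and `φ(q̄, ·)` are not identically equal. -/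
theorem stmt_10 (ε₀ c ε : ℝ) (h₀ : 0 < ε₀) (hc : c ≠ 0)
    (zp wp zq wq : ℂ) (hwp : wp ≠ 0) (hwq : wq ≠ 0)
    (hpq : (zp, wp) ≠ (zq, wq)) :
    ¬ (∀ ξ : ℂ, segrePhi ε₀ c ε zp wp ξ = segrePhi ε₀ c ε zq wq ξ) :=
  stmt_10_general ε₀ c ε h₀ hc zp wp zq wq hwp hpq
end
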